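/- (Cyclic sum formula for qMZSVs, depth 1) For 0 < q < 1 and an integer k ≥ 2, Σ_{j=0}^{k-2} ζ_q^⋆(k-j, j+1) = k·ζ_q(k+1) + (k-1)(1-q)·Σ_{m≥1} q^{(k-1)m}/[m]^k. -/

import Mathlib

/-!
At a diagonal point m₁ = m₂ = m the k - 1 summands of Σ_j ζ_q^⋆(k - j, j + 1) all equal
q^{(k-1)m}/[m]^{k+1}, and 1/[m] = (1 - q) + q^m/[m] splits this
into the m-th terms of ζ_q(k+1) and (1 - q) ζ_q(k).

For m₁ = n + d > m₂ = n the sum over j is a geometric progression, and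
[n + d] = [d] + q^d [n] = [n] + q^n [d] brings it to the form
  a(n) h(d) - a(n) h(n + d) - a(n + d) h(d),   a = zetaTerm q k,  h(m) = q^m / [m].
Summed over n, d ≥ 1 this is the double series Σ_{n,m ≥ 1} a(n) h(m) minus its parts above and
below the diagonal, so the off-diagonal contribution is Σ_m a(m) h(m) = ζ_q(k+1).
-/

open scoped BigOperators

/-- The q-integer [m] = (1-q^m)/(1-q). -/
noncomputable def qint (q : ℝ) (m : ℕ) : ℝ := (1 - q ^ m) / (1 - q)

/-- Depth-one q-zeta value ζ_q(k) = Σ_{m≥1} q^{(k-1)m}/[m]^k. -/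
noncomputable def zetaQ (q : ℝ) (k : ℕ) : ℝ :=
  ∑' m : ℕ, q ^ ((k - 1) * (m + 1)) / (qint q (m + 1)) ^ k

/-- Depth-two qMZV: sum over m₁ > m₂ ≥ 1, parametrized by m₂ = p.2+1, m₁ = p.2+p.1+2. -/
noncomputable def zetaQ2 (q : ℝ) (k₁ k₂ : ℕ) : ℝ :=
  ∑' p : ℕ × ℕ,
    q ^ ((k₁ - 1) * (p.2 + p.1 + 2) + (k₂ - 1) * (p.2 + 1)) /
      ((qint q (p.2 + p.1 + 2)) ^ k₁ * (qint q (p.2 + 1)) ^ k₂)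

/-- Depth-two qMZSV: sum over m₁ ≥ m₂ ≥ 1, parametrized by m₂ = p.2+1, m₁ = p.2+p.1+1. -/
noncomputable def zetaQStar2 (q : ℝ) (k₁ k₂ : ℕ) : ℝ :=
  ∑' p : ℕ × ℕ,
    q ^ ((k₁ - 1) * (p.2 + p.1 + 1) + (k₂ - 1) * (p.2 + 1)) /
      ((qint q (p.2 + p.1 + 1)) ^ k₁ * (qint q (p.2 + 1)) ^ k₂)

/-- Interpolated q-double zeta value. -/
noncomputable def zetaQT (q t : ℝ) (k₁ k₂ : ℕ) : ℝ :=
  zetaQ2 q k₁ k₂ + t * (zetaQ q (k₁ + k₂) + (1 - q) * zetaQ q (k₁ + k₂ - 1))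

open Finset

section Triangles

def triangleEquiv : (ℕ × ℕ) ⊕ ℕ ⊕ (ℕ × ℕ) ≃ ℕ × ℕ where
  toFun := Sum.elim (fun p => (p.1, p.1 + p.2 + 1))
    (Sum.elim (fun i => (i, i)) (fun p => (p.1 + p.2 + 1, p.2)))
  invFun p :=
    if p.1 < p.2 then .inl (p.1, p.2 - p.1 - 1)
    else if p.1 = p.2 then .inr (.inl p.1) else .inr (.inr (p.1 - p.2 - 1, p.2))
  left_inv := by
    rintro (⟨a, b⟩ | i | ⟨a, b⟩)
    · simp; omega
    · simp
    · simp [show ¬a + b + 1 < b by omega, show a + b + 1 ≠ b by omega]; omega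
  right_inv := by
    rintro ⟨a, b⟩
    dsimp only
    split_ifs <;> simp <;> omega

theorem HasSum.of_triangles {α : Type*} [AddCommMonoid α] [TopologicalSpace α] [ContinuousAdd α]
    {f : ℕ × ℕ → α} {a b c : α}
    (hu : HasSum (fun p : ℕ × ℕ => f (p.1, p.1 + p.2 + 1)) a)
    (hd : HasSum (fun i => f (i, i)) b)
    (hl : HasSum (fun p : ℕ × ℕ => f (p.1 + p.2 + 1, p.2)) c) : HasSum f (a + (b + c)) :=
  triangleEquiv.hasSum_iff.1 (hu.sum (hd.sum hl))

variable {α : Type*} [AddCommGroup α] [UniformSpace α] [IsUniformAddGroup α] [CompleteSpace α]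
  [T2Space α]

theorem Summable.tsum_sub_triangles {f : ℕ × ℕ → α} (hf : Summable f) :
    ∑' p : ℕ × ℕ, (f p - f (p.1, p.1 + p.2 + 1) - f (p.1 + p.2 + 1, p.2)) = ∑' i, f (i, i) := by
  have hu := (hf.comp_injective (i := fun p : ℕ × ℕ => (p.1, p.1 + p.2 + 1))
    (fun p p' h => by simp only [Prod.mk.injEq] at h; ext <;> omega)).hasSum
  have hd := (hf.comp_injective (i := fun i : ℕ => (i, i))
    fun _ _ h => congrArg Prod.fst h).hasSum
  have hl := (hf.comp_injective (i := fun p : ℕ × ℕ => (p.1 + p.2 + 1, p.2))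
    (fun p p' h => by simp only [Prod.mk.injEq] at h; ext <;> omega)).hasSum
  refine (((HasSum.of_triangles hu hd hl).sub hu).sub hl).tsum_eq.trans ?_
  abel

theorem Summable.tsum_prod_eq_zero_add {f : ℕ × ℕ → α} (hf : Summable f) :
    ∑' p, f p = ∑' b, f (0, b) + ∑' p : ℕ × ℕ, f (p.1 + 1, p.2) := by
  have hsucc : Summable fun p : ℕ × ℕ => f (p.1 + 1, p.2) :=
    hf.comp_injective (fun p p' h => by simp only [Prod.mk.injEq] at h; ext <;> omega)
  rw [hf.tsum_prod, hf.prod.tsum_eq_zero_add, hsucc.tsum_prod]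

end Triangles

theorem sum_geom_div_pow_mul_pow {F : Type*} [Field F] {x y z t : F} (hx : x ≠ 0) (hy : y ≠ 0)
    (hz : z ≠ 0) (hxyz : z = y + t * x) (K : ℕ) :
    ∑ j ∈ range K, t ^ (K - j) / (z ^ (K - j + 1) * x ^ (j + 1)) =
      t / (x ^ K * y * z) - t ^ (K + 1) / (z ^ (K + 1) * y) := by
  induction K with
  | zero => simp [mul_comm]
  | succ K ih =>
    have hterm : ∀ j ∈ range K, t ^ (K + 1 - j) / (z ^ (K + 1 - j + 1) * x ^ (j + 1)) =
        t / z * (t ^ (K - j) / (z ^ (K - j + 1) * x ^ (j + 1))) := by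
      intro j hj
      rw [show K + 1 - j = K - j + 1 by have := mem_range.1 hj; omega]
      field_simp
      ring
    rw [sum_range_succ, sum_congr rfl hterm, ← mul_sum, ih, Nat.add_sub_cancel_left]
    field_simp
    rw [hxyz]
    ring

noncomputable def zetaTerm (q : ℝ) (k m : ℕ) : ℝ := q ^ ((k - 1) * m) / qint q m ^ k

noncomputable def starTerm (q : ℝ) (k₁ k₂ m₁ m₂ : ℕ) : ℝ :=
  q ^ ((k₁ - 1) * m₁ + (k₂ - 1) * m₂) / (qint q m₁ ^ k₁ * qint q m₂ ^ k₂)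

noncomputable def cyclicStarTerm (q : ℝ) (k m₁ m₂ : ℕ) : ℝ :=
  ∑ j ∈ range (k - 1), starTerm q (k - j) (j + 1) m₁ m₂

section QSeries

variable {q : ℝ}

theorem qint_add (a b : ℕ) : qint q (a + b) = qint q a + q ^ a * qint q b := by
  rw [qint, qint, qint, pow_add]
  ring

theorem one_le_qint (hq0 : 0 ≤ q) (hq1 : q < 1) {m : ℕ} (hm : 1 ≤ m) : 1 ≤ qint q m := by
  rw [qint, le_div_iff₀ (by linarith)]
  linarith [pow_le_of_le_one hq0 hq1.le (by omega : m ≠ 0)]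

theorem qint_nonneg (hq0 : 0 ≤ q) (hq1 : q < 1) (m : ℕ) : 0 ≤ qint q m :=
  div_nonneg (sub_nonneg.2 (pow_le_one₀ hq0 hq1.le)) (by linarith)

theorem one_div_qint (hq0 : 0 ≤ q) (hq1 : q < 1) {m : ℕ} (hm : 1 ≤ m) :
    1 / qint q m = (1 - q) + q ^ m / qint q m := by
  have h := one_le_qint hq0 hq1 hm
  have hq : 1 - q ≠ 0 := by linarith
  field_simp
  rw [qint]
  field_simp
  ring

theorem pow_div_le_pow (hq0 : 0 ≤ q) (hq1 : q < 1) {e m : ℕ} (hme : m ≤ e) {D : ℝ}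
    (hD : 1 ≤ D) : q ^ e / D ≤ q ^ m :=
  (div_le_self (pow_nonneg hq0 e) hD).trans (pow_le_pow_of_le_one hq0 hq1.le hme)

theorem zetaTerm_succ {k : ℕ} (hk : 1 ≤ k) (m : ℕ) :
    zetaTerm q (k + 1) m = zetaTerm q k m * (q ^ m / qint q m) := by
  obtain ⟨K, rfl⟩ : ∃ K, k = K + 1 := ⟨k - 1, by omega⟩
  rw [zetaTerm, zetaTerm, div_mul_div_comm, ← pow_add, ← pow_succ]
  congr 2
  simp only [Nat.add_sub_cancel]
  ring

theorem zetaTerm_nonneg (hq0 : 0 ≤ q) (hq1 : q < 1) (k m : ℕ) : 0 ≤ zetaTerm q k m :=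
  div_nonneg (pow_nonneg hq0 _) (pow_nonneg (qint_nonneg hq0 hq1 m) k)

theorem summable_geometric_succ (hq0 : 0 ≤ q) (hq1 : q < 1) :
    Summable fun i : ℕ => q ^ (i + 1) :=
  (summable_nat_add_iff 1).2 (summable_geometric_of_lt_one hq0 hq1)

theorem summable_zetaTerm (hq0 : 0 ≤ q) (hq1 : q < 1) {k : ℕ} (hk : 2 ≤ k) :
    Summable fun i : ℕ => zetaTerm q k (i + 1) := by
  refine (summable_geometric_succ hq0 hq1).of_nonneg_of_le (fun i => zetaTerm_nonneg hq0 hq1 _ _)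
    fun i => pow_div_le_pow hq0 hq1 (Nat.le_mul_of_pos_left _ (by omega))
      (one_le_pow₀ (one_le_qint hq0 hq1 (by omega)))

theorem summable_pow_div_qint (hq0 : 0 ≤ q) (hq1 : q < 1) :
    Summable fun i : ℕ => q ^ (i + 1) / qint q (i + 1) := by
  refine (summable_geometric_succ hq0 hq1).of_nonneg_of_le
    (fun i => div_nonneg (pow_nonneg hq0 _) (qint_nonneg hq0 hq1 _))
    fun i => div_le_self (pow_nonneg hq0 _) (one_le_qint hq0 hq1 (by omega))

theorem summable_starTerm (hq0 : 0 ≤ q) (hq1 : q < 1) {k₁ : ℕ} (hk₁ : 2 ≤ k₁) (k₂ : ℕ) :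
    Summable fun p : ℕ × ℕ => starTerm q k₁ k₂ (p.2 + p.1 + 1) (p.2 + 1) := by
  have hgeom := summable_geometric_of_lt_one hq0 hq1
  refine (hgeom.mul_of_nonneg hgeom (fun i => pow_nonneg hq0 i) (fun i => pow_nonneg hq0 i)
    |>.of_nonneg_of_le (fun p => ?_) (fun p => ?_))
  · exact div_nonneg (pow_nonneg hq0 _) (mul_nonneg (pow_nonneg (qint_nonneg hq0 hq1 _) _)
      (pow_nonneg (qint_nonneg hq0 hq1 _) _))
  · have hD : 1 ≤ qint q (p.2 + p.1 + 1) ^ k₁ * qint q (p.2 + 1) ^ k₂ :=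
      one_le_mul_of_one_le_of_one_le (one_le_pow₀ (one_le_qint hq0 hq1 (by omega)))
        (one_le_pow₀ (one_le_qint hq0 hq1 (by omega)))
    have he : p.1 + p.2 ≤ (k₁ - 1) * (p.2 + p.1 + 1) + (k₂ - 1) * (p.2 + 1) := by
      have := Nat.le_mul_of_pos_left (p.2 + p.1 + 1) (show 0 < k₁ - 1 by omega)
      omega
    rw [starTerm, ← pow_add]
    exact pow_div_le_pow hq0 hq1 he hD

theorem cyclicStarTerm_self (hq0 : 0 ≤ q) (hq1 : q < 1) {k m : ℕ} (hk : 1 ≤ k) (hm : 1 ≤ m) :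
    cyclicStarTerm q k m m = (k - 1) * (zetaTerm q (k + 1) m + (1 - q) * zetaTerm q k m) := by
  have hterm : ∀ j ∈ range (k - 1),
      starTerm q (k - j) (j + 1) m m = zetaTerm q k m * (1 / qint q m) := by
    intro j hj
    have hjk := mem_range.1 hj
    rw [starTerm, zetaTerm, div_mul_div_comm, mul_one, ← pow_add, ← add_mul,
      show k - j - 1 + (j + 1 - 1) = k - 1 by omega, show k - j + (j + 1) = k + 1 by omega,
      pow_succ]
  rw [cyclicStarTerm, sum_congr rfl hterm, sum_const, card_range, nsmul_eq_mul, Nat.cast_sub hk,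
    Nat.cast_one, one_div_qint hq0 hq1 hm, zetaTerm_succ hk]
  ring

theorem cyclicStarTerm_add (hq0 : 0 ≤ q) (hq1 : q < 1) {k n d : ℕ} (hk : 1 ≤ k) (hn : 1 ≤ n)
    (hd : 1 ≤ d) :
    cyclicStarTerm q k (n + d) n =
      zetaTerm q k n * (q ^ d / qint q d - q ^ (n + d) / qint q (n + d)) -
        zetaTerm q k (n + d) * (q ^ d / qint q d) := by
  obtain ⟨K, rfl⟩ : ∃ K, k = K + 1 := ⟨k - 1, by omega⟩
  have hx := (zero_lt_one.trans_le (one_le_qint hq0 hq1 hn)).ne'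
  have hy := (zero_lt_one.trans_le (one_le_qint hq0 hq1 hd)).ne'
  have hz := (zero_lt_one.trans_le (one_le_qint hq0 hq1 (show 1 ≤ n + d by omega))).ne'
  have hterm : ∀ j ∈ range K, starTerm q (K + 1 - j) (j + 1) (n + d) n =
      q ^ (K * n) * ((q ^ d) ^ (K - j) / (qint q (n + d) ^ (K - j + 1) * qint q n ^ (j + 1))) := by
    intro j hj
    obtain ⟨i, rfl⟩ : ∃ i, K = j + i := ⟨K - j, by have := mem_range.1 hj; omega⟩
    simp only [starTerm, Nat.add_sub_cancel_left, show j + i + 1 - j = i + 1 by omega,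
      Nat.add_sub_cancel, ← pow_mul, ← pow_add, mul_div_assoc']
    ring_nf
  rw [cyclicStarTerm, Nat.add_sub_cancel, sum_congr rfl hterm, ← mul_sum,
    sum_geom_div_pow_mul_pow hx hy hz (by rw [add_comm, qint_add]) K]
  have hzx : qint q (n + d) = qint q n + q ^ n * qint q d := qint_add n d
  simp only [zetaTerm, Nat.add_sub_cancel, mul_add, pow_add, pow_mul]
  field_simp
  rw [hzx]
  ring

theorem tsum_cyclicStarTerm_diag (hq0 : 0 ≤ q) (hq1 : q < 1) {k : ℕ} (hk : 2 ≤ k) :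
    ∑' i : ℕ, cyclicStarTerm q k (i + 1) (i + 1) =
      (k - 1) * (zetaQ q (k + 1) + (1 - q) * zetaQ q k) := by
  have hζ := summable_zetaTerm hq0 hq1 hk
  have hζ' := summable_zetaTerm hq0 hq1 (show 2 ≤ k + 1 by omega)
  rw [tsum_congr fun i => cyclicStarTerm_self hq0 hq1 (by omega) (by omega : 1 ≤ i + 1),
    tsum_mul_left, hζ'.tsum_add (hζ.mul_left _), tsum_mul_left]
  rfl

theorem tsum_cyclicStarTerm_offDiag (hq0 : 0 ≤ q) (hq1 : q < 1) {k : ℕ} (hk : 2 ≤ k) :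
    ∑' p : ℕ × ℕ, cyclicStarTerm q k (p.2 + (p.1 + 1) + 1) (p.2 + 1) = zetaQ q (k + 1) := by
  set f : ℕ × ℕ → ℝ := fun p => zetaTerm q k (p.1 + 1) * (q ^ (p.2 + 1) / qint q (p.2 + 1))
  have hf : Summable f :=
    (summable_zetaTerm hq0 hq1 hk).mul_of_nonneg (summable_pow_div_qint hq0 hq1)
      (fun i => zetaTerm_nonneg hq0 hq1 _ _)
      (fun i => div_nonneg (pow_nonneg hq0 _) (qint_nonneg hq0 hq1 _))
  calc ∑' p : ℕ × ℕ, cyclicStarTerm q k (p.2 + (p.1 + 1) + 1) (p.2 + 1)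
      = ∑' p : ℕ × ℕ, (fun p : ℕ × ℕ => f p - f (p.1, p.1 + p.2 + 1) - f (p.1 + p.2 + 1, p.2))
          (Equiv.prodComm ℕ ℕ p) := by
        refine tsum_congr fun p => ?_
        rw [show p.2 + (p.1 + 1) + 1 = (p.2 + 1) + (p.1 + 1) by ring,
          cyclicStarTerm_add hq0 hq1 (by omega) (by omega) (by omega)]
        simp only [f, Equiv.prodComm_apply, Prod.swap,
          show p.2 + p.1 + 1 + 1 = p.2 + 1 + (p.1 + 1) by ring]
        ring
    _ = ∑' i, f (i, i) := ((Equiv.prodComm ℕ ℕ).tsum_eq _).trans hf.tsum_sub_triangles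
    _ = zetaQ q (k + 1) := tsum_congr fun i => (zetaTerm_succ (by omega) _).symm

end QSeries

theorem stmt_9 (q : ℝ) (hq0 : 0 < q) (hq1 : q < 1) (k : ℕ) (hk : 2 ≤ k) :
    ∑ j ∈ Finset.range (k - 1), zetaQStar2 q (k - j) (j + 1) =
      (k : ℝ) * zetaQ q (k + 1) + ((k : ℝ) - 1) * (1 - q) * zetaQ q k := by
  have hstar : ∀ j ∈ range (k - 1),
      Summable fun p : ℕ × ℕ => starTerm q (k - j) (j + 1) (p.2 + p.1 + 1) (p.2 + 1) :=
    fun j hj => summable_starTerm hq0.le hq1 (by have := mem_range.1 hj; omega) _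
  have hcyc : Summable fun p : ℕ × ℕ => cyclicStarTerm q k (p.2 + p.1 + 1) (p.2 + 1) :=
    summable_sum hstar
  calc ∑ j ∈ range (k - 1), zetaQStar2 q (k - j) (j + 1)
      = ∑' p : ℕ × ℕ, cyclicStarTerm q k (p.2 + p.1 + 1) (p.2 + 1) :=
        (Summable.tsum_finsetSum hstar).symm
    _ = ∑' i : ℕ, cyclicStarTerm q k (i + 1) (i + 1) +
          ∑' p : ℕ × ℕ, cyclicStarTerm q k (p.2 + (p.1 + 1) + 1) (p.2 + 1) :=
        hcyc.tsum_prod_eq_zero_add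
    _ = (k : ℝ) * zetaQ q (k + 1) + ((k : ℝ) - 1) * (1 - q) * zetaQ q k := by
        rw [tsum_cyclicStarTerm_diag hq0.le hq1 hk, tsum_cyclicStarTerm_offDiag hq0.le hq1 hk]
        ring
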